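/- Every finite strategic game satisfying positive population monotonicity in which every player has the same two strategies is coalitionally weakly acyclic: from every initial joint strategy there is a finite coalitional improvement path ending in a strong equilibrium. In particular, every coordination game on a directed graph in which only two colours are used has a strong equilibrium. -/

import Mathlib

/-!
With two strategies, every profitable coalitional deviation contains a profitable deviation in
which all deviators switch to one and the same colour, so a state without such monochromatic
deviations is a strong equilibrium. A deviation to `true` strictly decreases the number of
`false` players, so repeating them reaches a state without deviations to `true`; deviations to
`false` then strictly decrease the number of `true` players, and by positive population
monotonicity they never create a deviation to `true`. Hence the second phase ends in a state
with no monochromatic deviation at all.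
-/

/-- `s'` is a profitable deviation (of the non-empty coalition on which `s`
and `s'` differ) from `s`: every deviating player strictly improves. -/
def ProfDev {n : ℕ} {S : Type} (p : (Fin n → S) → Fin n → ℝ)
    (s s' : Fin n → S) : Prop :=
  s ≠ s' ∧ ∀ i, s i ≠ s' i → p s i < p s' i

/-- A strong equilibrium: no coalition has a profitable deviation. -/
def StrongEq {n : ℕ} {S : Type} (p : (Fin n → S) → Fin n → ℝ)
    (s : Fin n → S) : Prop :=
  ∀ s', ¬ ProfDev p s s'

open Finset Function Relation

def PositivePopulationMonotone {ι S : Type*} [DecidableEq ι] (p : (ι → S) → ι → ℝ) : Prop :=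
  ∀ s i j, p s i ≤ p (update s j (s i)) i

namespace PositivePopulationMonotone

variable {ι S : Type*} [DecidableEq ι] {p : (ι → S) → ι → ℝ}

theorem le_of_forall_notMem (hp : PositivePopulationMonotone p) {i : ι} (D : Finset ι) :
    ∀ {s t : ι → S}, (∀ j ∉ D, t j = s j) → (∀ j, t j = s j ∨ t j = s i) → p s i ≤ p t i := by
  induction D using Finset.induction_on with
  | empty =>
    intro s t hD _
    rw [funext fun j => hD j (notMem_empty j)]
  | insert j D _ ih =>
    intro s t hD hmove
    have hi : update s j (t j) i = s i := by
      rcases eq_or_ne i j with rfl | hij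
      · simpa using (hmove i).elim id id
      · exact update_of_ne hij _ _
    calc p s i ≤ p (update s j (t j)) i := by
          rcases hmove j with h | h
          · rw [h, update_eq_self]
          · rw [h]; exact hp s i j
      _ ≤ p t i := by
        refine ih (fun k hk => ?_) (fun k => ?_)
        · rcases eq_or_ne k j with rfl | hkj
          · simp
          · rw [update_of_ne hkj]; exact hD k (by simp [hkj, hk])
        · rw [hi]
          rcases eq_or_ne k j with rfl | hkj
          · simp
          · rw [update_of_ne hkj]; exact hmove k

theorem le_of_forall_eq_or_eq [Fintype ι] (hp : PositivePopulationMonotone p)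
    {s t : ι → S} {i : ι} (h : ∀ j, t j = s j ∨ t j = s i) : p s i ≤ p t i :=
  hp.le_of_forall_notMem univ (fun j hj => absurd (mem_univ j) hj) h

end PositivePopulationMonotone

section Deviations

variable {n : ℕ} {S : Type} {p : (Fin n → S) → Fin n → ℝ}

def ProfDevTo (p : (Fin n → S) → Fin n → ℝ) (c : S) (s t : Fin n → S) : Prop :=
  ProfDev p s t ∧ ∀ i, s i ≠ t i → t i = c

theorem ProfDev.exists_ne {s t : Fin n → S} (h : ProfDev p s t) : ∃ i, s i ≠ t i :=
  Function.ne_iff.mp h.1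

theorem ProfDevTo.card_lt [DecidableEq S] {c : S} {s t : Fin n → S} (h : ProfDevTo p c s t) :
    #{j | t j ≠ c} < #{j | s j ≠ c} := by
  obtain ⟨i, hi⟩ := h.1.exists_ne
  refine card_lt_card ((ssubset_iff_of_subset fun j hj => ?_).mpr ⟨i, ?_, ?_⟩)
  · simp only [mem_filter, mem_univ, true_and] at hj ⊢
    by_cases hsj : s j = t j
    · rwa [hsj]
    · exact absurd (h.2 j hsj) hj
  · simpa [h.2 i hi] using hi
  · simp [h.2 i hi]

theorem exists_reflTransGen_forall_not_profDevTo [DecidableEq S] (c : S) (P : (Fin n → S) → Prop)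
    (hP : ∀ s t, P s → ProfDevTo p c s t → P t) (s : Fin n → S) (hs : P s) :
    ∃ t, ReflTransGen (ProfDev p) s t ∧ P t ∧ ∀ u, ¬ ProfDevTo p c t u := by
  by_cases h : ∃ u, ProfDevTo p c s u
  · obtain ⟨u, hu⟩ := h
    obtain ⟨t, hut, ht⟩ := exists_reflTransGen_forall_not_profDevTo c P hP u (hP s u hs hu)
    exact ⟨t, .head hu.1 hut, ht⟩
  · exact ⟨s, .refl, hs, fun u hu => h ⟨u, hu⟩⟩
termination_by #{j | s j ≠ c}
decreasing_by exact hu.card_lt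

end Deviations

section TwoStrategies

variable {n : ℕ} {p : (Fin n → Bool) → Fin n → ℝ}

/-- Keep only the deviators who switched to the strategy `s' i` of one deviator `i`: with two
strategies every other player of `s'` either stayed or also plays `s' i`, so by PPM the kept
deviators still gain. -/
theorem exists_profDevTo_of_profDev (hp : PositivePopulationMonotone p) {s s' : Fin n → Bool}
    (h : ProfDev p s s') : ∃ c t, ProfDevTo p c s t := by
  obtain ⟨i, hi⟩ := h.exists_ne
  refine ⟨s' i, fun j => if s' j = s' i then s' i else s j, ⟨?_, fun j hj => ?_⟩, fun j hj => ?_⟩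
  · exact Function.ne_iff.mpr ⟨i, by simpa using hi⟩
  · have hj' : s' j = s' i ∧ s j ≠ s' i := by
      by_cases hc : s' j = s' i <;> simp_all
    have hmove : ∀ m, (if s' m = s' i then s' i else s m) = s' m ∨
        (if s' m = s' i then s' i else s m) = s' j := by
      intro m
      by_cases hm : s' m = s' i
      · simp [hm]
      · rw [if_neg hm, hj'.1]
        rcases eq_or_ne (s m) (s' m) with hsm | hsm
        · exact .inl hsm
        · exact .inr ((Bool.eq_not_of_ne hsm).trans (by rw [Bool.eq_not_of_ne hm, Bool.not_not]))
    calc p s j < p s' j := h.2 j (hj'.1 ▸ hj'.2)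
      _ ≤ _ := hp.le_of_forall_eq_or_eq hmove
  · by_cases hc : s' j = s' i <;> simp_all

theorem strongEq_of_forall_not_profDevTo (hp : PositivePopulationMonotone p) {s : Fin n → Bool}
    (h : ∀ c t, ¬ ProfDevTo p c s t) : StrongEq p s := fun _ hs' =>
  let ⟨c, t, ht⟩ := exists_profDevTo_of_profDev hp hs'
  h c t ht

/-- A deviation to `!c` never creates a deviation to `c`: the players who are not at `c` and
deviate from the new state to `c` could already have done so, unless all the deviators to `c`
just left `c`, and then each of them would gain twice in a round trip that PPM makes
unprofitable. -/
theorem forall_not_profDevTo_of_profDevTo_not (hp : PositivePopulationMonotone p) {c : Bool}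
    {s s' : Fin n → Bool} (hs : ∀ u, ¬ ProfDevTo p c s u) (hss' : ProfDevTo p (!c) s s') :
    ∀ t, ¬ ProfDevTo p c s' t := by
  intro t hs't
  have hstay : ∀ j, s j ≠ c → s' j = s j := fun j hj => by
    by_contra h
    exact h ((hss'.2 j (Ne.symm h)).trans (Bool.eq_not_of_ne hj).symm)
  by_cases hA : ∃ i, s i ≠ c ∧ s' i ≠ t i
  · obtain ⟨i, hic, hit⟩ := hA
    set u : Fin n → Bool := fun j => if s' j = t j then s j else c with hu
    have hdev : ∀ j, s j ≠ u j → s j ≠ c ∧ s' j ≠ t j := fun j hj => by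
      by_cases h : s' j = t j <;> simp_all
    refine hs u ⟨⟨Function.ne_iff.mpr ⟨i, by simp [hu, hit, hic]⟩, fun j hj => ?_⟩, fun j hj => ?_⟩
    · obtain ⟨hjc, hjt⟩ := hdev j hj
      have htj : t j = c := hs't.2 j hjt
      calc p s j ≤ p s' j := hp.le_of_forall_eq_or_eq fun m => by
              by_cases hm : s m = s' m
              · exact .inl hm.symm
              · exact .inr ((hss'.2 m hm).trans (Bool.eq_not_of_ne hjc).symm)
        _ < p t j := hs't.1.2 j hjt
        _ ≤ p u j := hp.le_of_forall_eq_or_eq fun m => by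
              by_cases hm : s' m = t m
              · by_cases hmc : s m = c
                · simp [hu, hm, hmc, htj]
                · simp [hu, hm, ← hstay m hmc]
              · simp [hu, hm, htj]
    · simp [hu, (hdev j hj).2]
  · push Not at hA
    obtain ⟨i, hi⟩ := hs't.1.exists_ne
    have hti : t i = c := hs't.2 i hi
    have hsi : s i = c := by_contra fun h => hi (hA i h)
    have hs'i : s i ≠ s' i := by rw [hsi]; exact fun h => hi (h ▸ hti.symm)
    have hround : p t i ≤ p s i := hp.le_of_forall_eq_or_eq fun m => by
      by_cases hmc : s m = c
      · exact .inr (hmc.trans hti.symm)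
      · exact .inl ((hstay m hmc).symm.trans (hA m hmc))
    linarith [hss'.1.2 i hs'i, hs't.1.2 i hi]

end TwoStrategies

/-- Every finite strategic game satisfying positive population monotonicity
(player `i`'s payoff weakly increases when any player `j` switches to `i`'s
strategy) in which every player has the same two strategies (modelled as
`Bool`) is coalitionally weakly acyclic: from every initial joint strategy
there is a finite coalitional improvement path ending in a strong equilibrium.
In particular (since coordination games satisfy PPM), every coordination game
on a directed graph in which only two colours are used has a strong
equilibrium. -/
theorem two_strategy_PPM_c_weakly_acyclic {n : ℕ}
    (p : (Fin n → Bool) → Fin n → ℝ)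
    (hPPM : ∀ (s : Fin n → Bool) (i j : Fin n),
      p s i ≤ p (Function.update s j (s i)) i) :
    ∀ s : Fin n → Bool,
      ∃ t, Relation.ReflTransGen (ProfDev p) s t ∧ StrongEq p t := by
  have hp : PositivePopulationMonotone p := hPPM
  intro s
  obtain ⟨s₁, hss₁, -, hs₁⟩ := exists_reflTransGen_forall_not_profDevTo true (fun _ => True)
    (fun _ _ _ _ => trivial) s trivial
  obtain ⟨t, hs₁t, htrue, hfalse⟩ := exists_reflTransGen_forall_not_profDevTo false
    (fun u => ∀ v, ¬ ProfDevTo p true u v)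
    (fun _ _ hu huv => forall_not_profDevTo_of_profDevTo_not hp hu huv) s₁ hs₁
  refine ⟨t, hss₁.trans hs₁t, strongEq_of_forall_not_profDevTo hp fun c v hv => ?_⟩
  cases c
  exacts [hfalse v hv, htrue v hv]
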